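/- arXiv:0810.1964 — 4 statements merged into one kernel-verified Lean document; each statement's English description precedes it below -/
import Mathlib

section
/- Let (m₂, m₃) solve m₂' = -2m₃, m₃' = -(1/2)m₂² on an interval, with initial data satisfying m₂(0) > (6 m₃(0)²)^{1/3} (i.e., 6m₃(0)² < m₂(0)³). Then the solution cannot be extended globally in time: it blows up in finite time. -/
/-!
The quantity `E = m₂³ - 6 m₃²` is conserved, and supercritical data means `E > 0`. Then
`m₂³ ≥ E` keeps `m₂` positive and `m₂²` bounded below, so `m₃` decreases at a uniform rate and
eventually becomes negative. From then on the ratio `m₂ / m₃` is negative, yet by conservation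
its derivative is `(m₂³ / 2 - 2 m₃²) / m₃² = 1 + E / (2 m₃²) ≥ 1`, so it must become positive.
-/

open Set

theorem add_mul_sub_le_of_le_hasDerivAt {f f' : ℝ → ℝ} {a C : ℝ}
    (hf : ∀ t, a ≤ t → HasDerivAt f (f' t) t) (hC : ∀ t, a ≤ t → C ≤ f' t)
    {t : ℝ} (ht : a ≤ t) : f a + C * (t - a) ≤ f t := by
  have hmem : ∀ s ∈ interior (Ici a), a ≤ s := fun s hs => le_of_lt (by simpa using hs)
  have key := (convex_Ici a).mul_sub_le_image_sub_of_le_deriv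
    (fun s hs => (hf s hs).continuousAt.continuousWithinAt)
    (fun s hs => (hf s (hmem s hs)).differentiableAt.differentiableWithinAt)
    (fun s hs => (hf s (hmem s hs)).deriv ▸ hC s (hmem s hs)) a self_mem_Ici t ht ht
  linarith

theorem min_one_le_sq_of_le_pow_three {x E : ℝ} (h : E ≤ x ^ 3) : min 1 E ≤ x ^ 2 := by
  rcases le_or_gt 1 x with hx | hx
  · exact (min_le_left _ _).trans (by nlinarith)
  rcases le_or_gt 0 x with hx₀ | hx₀
  · exact (min_le_right _ _).trans (h.trans (by nlinarith [mul_nonneg hx₀ hx₀]))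
  · exact (min_le_right _ _).trans (h.trans (by nlinarith [sq_nonneg x]))

structure IsForwardTraceSolution (m2 m3 : ℝ → ℝ) : Prop where
  hasDerivAt_m2 : ∀ t : ℝ, 0 ≤ t → HasDerivAt m2 (-2 * m3 t) t
  hasDerivAt_m3 : ∀ t : ℝ, 0 ≤ t → HasDerivAt m3 (-(1/2) * (m2 t)^2) t

namespace IsForwardTraceSolution

variable {m2 m3 : ℝ → ℝ}

theorem energy_eq (hm : IsForwardTraceSolution m2 m3) {t : ℝ} (ht : 0 ≤ t) :
    m2 t ^ 3 - 6 * m3 t ^ 2 = m2 0 ^ 3 - 6 * m3 0 ^ 2 := by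
  have hderiv : ∀ s, 0 ≤ s → HasDerivAt (fun u => m2 u ^ 3 - 6 * m3 u ^ 2) 0 s := by
    intro s hs
    refine (((hm.hasDerivAt_m2 s hs).pow 3).sub
      (((hm.hasDerivAt_m3 s hs).pow 2).const_mul 6)).congr_deriv ?_
    push_cast
    ring
  exact constant_of_has_deriv_right_zero
    (fun s hs => (hderiv s hs.1).continuousAt.continuousWithinAt)
    (fun s hs => (hderiv s hs.1).hasDerivWithinAt) t ⟨ht, le_rfl⟩

theorem m2_pos (hm : IsForwardTraceSolution m2 m3) (hsup : 6 * m3 0 ^ 2 < m2 0 ^ 3)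
    {t : ℝ} (ht : 0 ≤ t) : 0 < m2 t := by
  have hcube : 0 < m2 t ^ 3 := by nlinarith [hm.energy_eq ht, sq_nonneg (m3 t)]
  exact (Odd.pow_pos_iff (by decide)).mp hcube

theorem m3_le (hm : IsForwardTraceSolution m2 m3) {t : ℝ} (ht : 0 ≤ t) :
    m3 t ≤ m3 0 - min 1 (m2 0 ^ 3 - 6 * m3 0 ^ 2) / 2 * t := by
  have hslope : ∀ s, 0 ≤ s → min 1 (m2 0 ^ 3 - 6 * m3 0 ^ 2) / 2 ≤ -(-(1/2) * m2 s ^ 2) := by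
    intro s hs
    have := min_one_le_sq_of_le_pow_three (x := m2 s) (E := m2 0 ^ 3 - 6 * m3 0 ^ 2)
      (by nlinarith [hm.energy_eq hs, sq_nonneg (m3 s)])
    linarith
  have := add_mul_sub_le_of_le_hasDerivAt (fun s hs => (hm.hasDerivAt_m3 s hs).neg) hslope ht
  simp only [Pi.neg_apply] at this
  linarith

theorem m3_antitone (hm : IsForwardTraceSolution m2 m3) {s t : ℝ} (hs : 0 ≤ s) (hst : s ≤ t) :
    m3 t ≤ m3 s := by
  have := add_mul_sub_le_of_le_hasDerivAt (f := fun u => -m3 u) (C := 0)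
    (fun u hu => (hm.hasDerivAt_m3 u (hs.trans hu)).neg) (fun u _ => by nlinarith) hst
  linarith

theorem hasDerivAt_m2_div_m3 (hm : IsForwardTraceSolution m2 m3) {t : ℝ} (ht : 0 ≤ t)
    (hm3 : m3 t ≠ 0) :
    HasDerivAt (fun s => m2 s / m3 s) (1 + (m2 0 ^ 3 - 6 * m3 0 ^ 2) / (2 * m3 t ^ 2)) t := by
  refine ((hm.hasDerivAt_m2 t ht).div (hm.hasDerivAt_m3 t ht) hm3).congr_deriv ?_
  rw [← hm.energy_eq ht]
  field_simp
  ring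

end IsForwardTraceSolution

/-- Finite-time blowup for supercritical data of the 3D trace dynamics:
no global-in-time solution exists when `m₂(0)³ > 6 m₃(0)²`. -/
theorem stmt_7 (m2 m3 : ℝ → ℝ)
    (h2 : ∀ t : ℝ, 0 ≤ t → HasDerivAt m2 (-2 * m3 t) t)
    (h3 : ∀ t : ℝ, 0 ≤ t → HasDerivAt m3 (-(1/2) * (m2 t)^2) t)
    (hinit : 6 * (m3 0)^2 < (m2 0)^3) :
    False := by
  have hm : IsForwardTraceSolution m2 m3 := ⟨h2, h3⟩
  set E := m2 0 ^ 3 - 6 * m3 0 ^ 2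
  have hE : 0 < E := by linarith
  set T := 2 * (|m3 0| + 1) / min 1 E
  have hT : 0 ≤ T := by positivity
  have hm3T : m3 T < 0 := by
    have : min 1 E / 2 * T = |m3 0| + 1 := by simp only [T]; field_simp
    linarith [hm.m3_le hT, le_abs_self (m3 0)]
  have hm3_neg : ∀ t, T ≤ t → m3 t < 0 := fun t ht => (hm.m3_antitone hT ht).trans_lt hm3T
  have hratio_neg : ∀ t, T ≤ t → m2 t / m3 t < 0 := fun t ht =>
    div_neg_of_pos_of_neg (hm.m2_pos hinit (hT.trans ht)) (hm3_neg t ht)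
  set t₁ := T - m2 T / m3 T + 1
  have ht₁ : T ≤ t₁ := by linarith [hratio_neg T le_rfl]
  have hgrowth := add_mul_sub_le_of_le_hasDerivAt (C := 1)
    (fun t ht => hm.hasDerivAt_m2_div_m3 (hT.trans ht) (hm3_neg t ht).ne)
    (fun t _ => le_add_of_nonneg_right (by positivity)) ht₁
  linarith [hratio_neg t₁ ht₁]
end

section
/- Along trajectories of the 3D trace dynamics m₂' = -2m₃, m₃' = -(1/2)m₂², the region {(m₂, m₃) : m₂³ > 6m₃²} is positively invariant. -/
open Set

/-! The quantity `m₂³ - 6 m₃²` is a first integral of the flow: its derivative is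
`3 m₂² (-2 m₃) - 12 m₃ (-(1/2) m₂²) = 0`. Being constant along a trajectory, it stays
positive once it is positive at time `0`. -/

theorem eqOn_Ico_of_hasDerivAt_zero {E : Type*} [NormedAddCommGroup E] [NormedSpace ℝ E]
    {f : ℝ → E} {a b : ℝ} (hf : ∀ t ∈ Ico a b, HasDerivAt f 0 t) :
    ∀ t ∈ Ico a b, f t = f a := by
  intro t ht
  have hsub : Icc a t ⊆ Ico a b := Icc_subset_Ico_right ht.2
  refine constant_of_has_deriv_right_zero (fun x hx => ?_) (fun x hx => ?_) t ⟨ht.1, le_rfl⟩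
  · exact (hf x (hsub hx)).continuousAt.continuousWithinAt
  · exact (hf x (hsub (Ico_subset_Icc_self hx))).hasDerivWithinAt

theorem hasDerivAt_cube_sub_six_mul_sq {m2 m3 : ℝ → ℝ} {t : ℝ}
    (h2 : HasDerivAt m2 (-2 * m3 t) t) (h3 : HasDerivAt m3 (-(1/2) * (m2 t)^2) t) :
    HasDerivAt (fun s => (m2 s)^3 - 6 * (m3 s)^2) 0 t := by
  refine ((h2.fun_pow 3).sub ((h3.fun_pow 2).const_mul 6)).congr_deriv ?_
  ring

theorem stmt_8_general (T : ℝ) (m2 m3 : ℝ → ℝ)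
    (h2 : ∀ t ∈ Set.Ico (0:ℝ) T, HasDerivAt m2 (-2 * m3 t) t)
    (h3 : ∀ t ∈ Set.Ico (0:ℝ) T, HasDerivAt m3 (-(1/2) * (m2 t)^2) t)
    (hinit : 6 * (m3 0)^2 < (m2 0)^3) :
    ∀ t ∈ Set.Ico (0:ℝ) T, 6 * (m3 t)^2 < (m2 t)^3 := by
  intro t ht
  have hconst : (m2 t)^3 - 6 * (m3 t)^2 = (m2 0)^3 - 6 * (m3 0)^2 :=
    eqOn_Ico_of_hasDerivAt_zero
      (fun s hs => hasDerivAt_cube_sub_six_mul_sq (h2 s hs) (h3 s hs)) t ht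
  linarith

/-- Positive invariance of the supercritical region `{m₂³ > 6 m₃²}` for the
3D trace dynamics. -/
theorem stmt_8 (T : ℝ) (m2 m3 : ℝ → ℝ)
    (h2 : ∀ t ∈ Set.Ico (0:ℝ) T, HasDerivAt m2 (-2 * m3 t) t)
    (h3 : ∀ t ∈ Set.Ico (0:ℝ) T, HasDerivAt m3 (-(1/2) * (m2 t)^2) t)
    (h0 : (0:ℝ) ∈ Set.Ico (0:ℝ) T)
    (hinit : 6 * (m3 0)^2 < (m2 0)^3) :
    ∀ t ∈ Set.Ico (0:ℝ) T, 6 * (m3 t)^2 < (m2 t)^3 :=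
  stmt_8_general T m2 m3 h2 h3 hinit
end

section
/- For s, w ∈ ℝ, let m_k be the k-th power sum of the four real numbers 1+s, -1+w, -1, 1-s-w. Then p := (3m₃² - m₂³ - 9m₂(m₄ - (7/12)m₂²))² + 108(m₄ - (7/12)m₂²)³ equals -27(s+2)²w²(s-w+2)²(2s+w)²(s+2w-2)²(s+w-2)². -/
/-- The separatrix discriminant of the zero-sum real quadruple
`(1+s, -1+w, -1, 1-s-w)` factors completely. -/
theorem stmt_16 (s w : ℝ) (m : ℕ → ℝ)
    (hm : ∀ k, m k = (1 + s)^k + (-1 + w)^k + (-1 : ℝ)^k + (1 - s - w)^k) :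
    (3 * (m 3)^2 - (m 2)^3 - 9 * m 2 * (m 4 - (7/12) * (m 2)^2))^2
        + 108 * (m 4 - (7/12) * (m 2)^2)^3
      = -27 * (s + 2)^2 * w^2 * (s - w + 2)^2 * (2*s + w)^2
          * (s + 2*w - 2)^2 * (s + w - 2)^2 := by
  rw [hm 2, hm 3, hm 4]; ring
end

section
/- Let (a, b) : [0,∞) → ℝ² solve a' = -b²/2, b' = -2ab with initial data satisfying |b(0)| ≤ 2a(0) and a(0) ≥ 0. Then the solution is globally bounded: a(t)² + b(t)² ≤ a(0)² + b(0)² for all t ≥ 0 (in particular a is nonincreasing and 4a² - b² = 4a(0)² - b(0)² is conserved with the sector |b| ≤ 2a invariant). -/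
/-!
Writing `u = 2a + b` and `v = 2a - b`, the system becomes the pair of linear equations
`u' = -b u`, `v' = b v`, so `u` and `v` keep the sign of their initial values: the sector
`u, v ≥ 0` is invariant, and `4a² - b² = u v` is conserved. Since `a' ≤ 0` and `a ≥ 0` there,
`a² + b² = 5a² - (4a² - b²)` is bounded by its initial value.
-/

open Set

theorem eq_of_hasDerivAt_zero_Ici {f : ℝ → ℝ} {t₀ : ℝ}
    (hf : ∀ s, t₀ ≤ s → HasDerivAt f 0 s) {t : ℝ} (ht : t₀ ≤ t) : f t = f t₀ :=
  constant_of_has_deriv_right_zero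
    (fun s hs => (hf s hs.1).continuousAt.continuousWithinAt)
    (fun s hs => (hf s hs.1).hasDerivWithinAt) t ⟨ht, le_rfl⟩

theorem exists_hasDerivAt_of_continuousOn_Ici {c : ℝ → ℝ} {t₀ : ℝ}
    (hc : ContinuousOn c (Ici t₀)) : ∃ C : ℝ → ℝ, ∀ s, t₀ ≤ s → HasDerivAt C (c s) s := by
  have hext : Continuous fun s => c (max s t₀) :=
    hc.comp_continuous (continuous_id.max continuous_const) fun _ => mem_Ici.2 (le_max_right _ _)
  refine ⟨fun s => ∫ x in t₀..s, c (max x t₀), fun s hs => ?_⟩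
  simpa [max_eq_left hs] using (hext.integral_hasStrictDerivAt t₀ s).hasDerivAt

theorem nonneg_of_hasDerivAt_mul_self {w c : ℝ → ℝ} {t₀ : ℝ} (hc : ContinuousOn c (Ici t₀))
    (hw : ∀ s, t₀ ≤ s → HasDerivAt w (c s * w s) s) (h₀ : 0 ≤ w t₀) {t : ℝ} (ht : t₀ ≤ t) :
    0 ≤ w t := by
  obtain ⟨C, hC⟩ := exists_hasDerivAt_of_continuousOn_Ici hc
  have hconst : w t * Real.exp (-C t) = w t₀ * Real.exp (-C t₀) := by
    refine eq_of_hasDerivAt_zero_Ici (f := fun s => w s * Real.exp (-C s)) (fun s hs => ?_) ht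
    exact ((hw s hs).mul (hC s hs).neg.exp).congr_deriv (by ring)
  have hpos : 0 < Real.exp (-C t) := Real.exp_pos _
  nlinarith [mul_nonneg h₀ (Real.exp_pos (-C t₀)).le]

section ReducedSystem

variable {a b : ℝ → ℝ}
  (ha : ∀ t : ℝ, 0 ≤ t → HasDerivAt a (-(b t)^2 / 2) t)
  (hb : ∀ t : ℝ, 0 ≤ t → HasDerivAt b (-2 * a t * b t) t)

include ha in
theorem antitoneOn_of_reducedSystem : AntitoneOn a (Ici 0) := by
  refine antitoneOn_of_hasDerivWithinAt_nonpos (convex_Ici 0)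
    (fun s hs => (ha s hs).continuousAt.continuousWithinAt)
    (fun s hs => (ha s (interior_subset hs)).hasDerivWithinAt) fun s _ => ?_
  nlinarith [sq_nonneg (b s)]

include ha hb in
theorem reducedSystem_conserved {t : ℝ} (ht : 0 ≤ t) :
    4 * (a t)^2 - (b t)^2 = 4 * (a 0)^2 - (b 0)^2 := by
  refine eq_of_hasDerivAt_zero_Ici (f := fun s => 4 * (a s)^2 - (b s)^2) (fun s hs => ?_) ht
  exact ((((ha s hs).pow 2).const_mul 4).sub ((hb s hs).pow 2)).congr_deriv (by ring)

include ha hb in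
theorem reducedSystem_sector_invariant (hsec : |b 0| ≤ 2 * a 0) {t : ℝ} (ht : 0 ≤ t) :
    |b t| ≤ 2 * a t := by
  have hbc : ContinuousOn b (Ici 0) := fun s hs => (hb s hs).continuousAt.continuousWithinAt
  obtain ⟨hlo, hhi⟩ := abs_le.mp hsec
  have hu : 0 ≤ 2 * a t + b t := by
    refine nonneg_of_hasDerivAt_mul_self (w := fun s => 2 * a s + b s) hbc.neg
      (fun s hs => ?_) (by linarith) ht
    exact (((ha s hs).const_mul 2).add (hb s hs)).congr_deriv (by simp only [Pi.neg_apply]; ring)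
  have hv : 0 ≤ 2 * a t - b t := by
    refine nonneg_of_hasDerivAt_mul_self (w := fun s => 2 * a s - b s) hbc
      (fun s hs => ?_) (by linarith) ht
    exact (((ha s hs).const_mul 2).sub (hb s hs)).congr_deriv (by ring)
  exact abs_le.mpr ⟨by linarith, by linarith⟩

end ReducedSystem

theorem stmt_18_general (a b : ℝ → ℝ)
    (ha : ∀ t : ℝ, 0 ≤ t → HasDerivAt a (-(b t)^2 / 2) t)
    (hb : ∀ t : ℝ, 0 ≤ t → HasDerivAt b (-2 * a t * b t) t)
    (hsec : |b 0| ≤ 2 * a 0) :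
    (∀ t : ℝ, 0 ≤ t → (a t)^2 + (b t)^2 ≤ (a 0)^2 + (b 0)^2) ∧
    AntitoneOn a (Set.Ici 0) ∧
    (∀ t : ℝ, 0 ≤ t →
      4 * (a t)^2 - (b t)^2 = 4 * (a 0)^2 - (b 0)^2 ∧ |b t| ≤ 2 * a t) := by
  have hanti := antitoneOn_of_reducedSystem ha
  refine ⟨fun t ht => ?_, hanti,
    fun t ht => ⟨reducedSystem_conserved ha hb ht, reducedSystem_sector_invariant ha hb hsec ht⟩⟩
  have hdecr : a t ≤ a 0 := hanti self_mem_Ici ht ht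
  have hnonneg : 0 ≤ a t := by
    linarith [abs_nonneg (b t), reducedSystem_sector_invariant ha hb hsec ht]
  nlinarith [reducedSystem_conserved ha hb ht]

/-- Global boundedness in the subcritical sector `{a ≥ 0, |b| ≤ 2a}` for the
reduced system `a' = -b²/2`, `b' = -2ab`: the solution stays bounded, `a` is
nonincreasing, `4a² - b²` is conserved and the sector is invariant. -/
theorem stmt_18 (a b : ℝ → ℝ)
    (ha : ∀ t : ℝ, 0 ≤ t → HasDerivAt a (-(b t)^2 / 2) t)
    (hb : ∀ t : ℝ, 0 ≤ t → HasDerivAt b (-2 * a t * b t) t)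
    (hsec : |b 0| ≤ 2 * a 0) (ha0 : 0 ≤ a 0) :
    (∀ t : ℝ, 0 ≤ t → (a t)^2 + (b t)^2 ≤ (a 0)^2 + (b 0)^2) ∧
    AntitoneOn a (Set.Ici 0) ∧
    (∀ t : ℝ, 0 ≤ t →
      4 * (a t)^2 - (b t)^2 = 4 * (a 0)^2 - (b 0)^2 ∧ |b t| ≤ 2 * a t) :=
  stmt_18_general a b ha hb hsec
end
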